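/- Under the ROBE-Z setup, the estimator admits the pairwise expansion Ŝ(x,y) = Σ_{i=0}^{n−1} Σ_{i'=0}^{n−1} x_i y_{i'} g(i) g(i') 𝟙[idx(i) = idx(i')], and its second moment equals E[ Ŝ(x,y)² ] = ⟨x,y⟩² + (1/m)·( Σ_{(i,j): Z_id(i) ≠ Z_id(j)} x_i² y_j² + Σ_{(i,j): Z_id(i) ≠ Z_id(j)} x_i y_i x_j y_j ). -/

import Mathlib

open Finset

noncomputable section

/-- Sign value of a Boolean: `true ↦ +1`, `false ↦ -1`. -/
def sgn (b : Bool) : ℝ := if b then 1 else -1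

/-- The block id of an index `i` is a valid index into `Fin (n / Z)`. -/
theorem blockLt {n Z : ℕ} (hdvd : Z ∣ n) (i : Fin n) : i.1 / Z < n / Z :=
  Nat.div_lt_div_of_lt_of_dvd hdvd i.isLt

/-- ROBE-Z location map: `idx i = (h (⌊i/Z⌋) + (i mod Z)) mod m`. -/
def idx (n m Z : ℕ) (hdvd : Z ∣ n) (h : Fin (n / Z) → Fin m) (i : Fin n) : ℕ :=
  ((h ⟨i.1 / Z, blockLt hdvd i⟩).1 + i.1 % Z) % m

/-- The ROBE-Z inner-product estimator `Ŝ(x,y)`, as a function of the random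
sample `ω = (h, g)` drawn from the (finite) product space. -/
def est (n m Z : ℕ) (hdvd : Z ∣ n) (x y : Fin n → ℝ)
    (ω : (Fin (n / Z) → Fin m) × (Fin n → Bool)) : ℝ :=
  ∑ j : Fin m,
    (∑ i : Fin n, x i * sgn (ω.2 i) * (if idx n m Z hdvd ω.1 i = j.1 then 1 else 0)) *
    (∑ i : Fin n, y i * sgn (ω.2 i) * (if idx n m Z hdvd ω.1 i = j.1 then 1 else 0))

/-- Expectation with respect to the uniform (product) measure on the finite
sample space of pairs `(h, g)`. -/
def expec (n m Z : ℕ) (f : ((Fin (n / Z) → Fin m) × (Fin n → Bool)) → ℝ) : ℝ :=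
  (∑ ω : (Fin (n / Z) → Fin m) × (Fin n → Bool), f ω) /
    (Fintype.card ((Fin (n / Z) → Fin m) × (Fin n → Bool)))

/-!
For a fixed hash `h`, `Ŝ` is a Rademacher chaos `∑ᵢ ∑ₖ aᵢₖ gᵢ gₖ` with
`aᵢₖ = xᵢ yₖ 𝟙[idx i = idx k]`. The Walsh characters `χ_S = ∏_{t ∈ S} g_t` are orthonormal,
so averaging over the signs gives `(∑ᵢ aᵢᵢ)² + ∑_{i ≠ k} aᵢₖ (aᵢₖ + aₖᵢ)`. Here `aᵢᵢ = xᵢ yᵢ`,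
and for `i ≠ k` the indices never collide inside one block (there `idx` is injective because
`Z ≤ m`), while across two blocks they collide for exactly a `1/m` fraction of the hashes.
-/

theorem sum_offDiag_ite_pair_eq {ι M : Type*} [Fintype ι] [DecidableEq ι] [AddCommMonoid M]
    (f : ι × ι → M) {p : ι × ι} (hp : p ∈ (Finset.univ : Finset ι).offDiag) :
    ∑ q ∈ Finset.univ.offDiag, (if q = p ∨ q = p.swap then f q else 0) = f p + f p.swap := by
  have hswap : p ≠ p.swap := fun h => (Finset.mem_offDiag.1 hp).2.2 (congrArg Prod.fst h)
  rw [← Finset.sum_filter, ← Finset.sum_pair hswap]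
  congr 1
  ext q
  simp only [Finset.mem_filter, Finset.mem_offDiag, Finset.mem_insert, Finset.mem_singleton]
  rw [Finset.mem_offDiag] at hp
  constructor
  · exact And.right
  · rintro (rfl | rfl) <;> simp_all [eq_comm]

theorem sum_offDiag_ite_eq_sum_sum {ι M : Type*} [Fintype ι] [DecidableEq ι] [AddCommMonoid M]
    (P : ι → ι → Prop) [DecidableRel P] (hP : ∀ i, ¬ P i i) (F : ι → ι → M) :
    ∑ p ∈ Finset.univ.offDiag, (if P p.1 p.2 then F p.1 p.2 else 0) =
      ∑ i, ∑ k, if P i k then F i k else 0 := by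
  rw [← Finset.sum_product' Finset.univ Finset.univ (fun i k => if P i k then F i k else 0)]
  refine Finset.sum_subset (fun p hp => ?_) fun p _ hp => ?_
  · simp
  · rw [Finset.mem_offDiag] at hp
    simp only [Finset.mem_univ, true_and, not_not] at hp
    rw [← hp, if_neg (hP _)]

section Rademacher

variable {ι : Type*} [Fintype ι] [DecidableEq ι]

theorem sgn_mul_self (b : Bool) : sgn b * sgn b = 1 := by
  cases b <;> norm_num [sgn]

theorem sum_prod_sgn_mul_prod_sgn (S T : Finset ι) :
    ∑ g : ι → Bool, (∏ t ∈ S, sgn (g t)) * ∏ t ∈ T, sgn (g t) =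
      if S = T then 2 ^ Fintype.card ι else 0 := by
  have hfactor (t : ι) :
      ∑ b : Bool, (if t ∈ S then sgn b else 1) * (if t ∈ T then sgn b else 1) =
        if (t ∈ S ↔ t ∈ T) then 2 else 0 := by
    by_cases hS : t ∈ S <;> by_cases hT : t ∈ T <;> norm_num [hS, hT, Fintype.sum_bool, sgn]
  calc ∑ g : ι → Bool, (∏ t ∈ S, sgn (g t)) * ∏ t ∈ T, sgn (g t)
      = ∑ g : ι → Bool, ∏ t, (if t ∈ S then sgn (g t) else 1) *
          (if t ∈ T then sgn (g t) else 1) := by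
        simp only [Finset.prod_mul_distrib, Finset.prod_ite_mem, Finset.univ_inter]
    _ = ∏ t, if (t ∈ S ↔ t ∈ T) then (2 : ℝ) else 0 := by
        rw [← Finset.prod_congr rfl fun t _ => hfactor t]
        exact (Fintype.prod_sum fun t b =>
          (if t ∈ S then sgn b else 1) * (if t ∈ T then sgn b else 1)).symm
    _ = if S = T then 2 ^ Fintype.card ι else 0 := by
        simp [Finset.prod_ite_zero, Finset.ext_iff]

theorem sum_sgn_mul_sgn (i k : ι) :
    ∑ g : ι → Bool, sgn (g i) * sgn (g k) = if i = k then 2 ^ Fintype.card ι else 0 := by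
  simpa using sum_prod_sgn_mul_prod_sgn {i} {k}

theorem sum_sgn_mul_sgn_mul_sgn_mul_sgn {i k i' k' : ι} (h : i ≠ k) (h' : i' ≠ k') :
    ∑ g : ι → Bool, sgn (g i) * sgn (g k) * (sgn (g i') * sgn (g k')) =
      if (i', k') = (i, k) ∨ (i', k') = (k, i) then 2 ^ Fintype.card ι else 0 := by
  have hpair : ({i, k} : Finset ι) = {i', k'} ↔ (i', k') = (i, k) ∨ (i', k') = (k, i) := by
    rw [← Finset.coe_inj, Finset.coe_pair, Finset.coe_pair, Set.pair_eq_pair_iff]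
    simp only [Prod.mk.injEq]; tauto
  simpa [Finset.prod_pair h, Finset.prod_pair h', hpair] using
    sum_prod_sgn_mul_prod_sgn {i, k} {i', k'}

theorem sum_sum_offDiag_sgn_mul_sgn (a : ι → ι → ℝ) :
    ∑ g : ι → Bool, ∑ p ∈ Finset.univ.offDiag, a p.1 p.2 * sgn (g p.1) * sgn (g p.2) = 0 := by
  rw [Finset.sum_comm]
  refine Finset.sum_eq_zero fun p hp => ?_
  simp only [mul_assoc, ← Finset.mul_sum, sum_sgn_mul_sgn, if_neg (Finset.mem_offDiag.1 hp).2.2,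
    mul_zero]

theorem sum_sq_sum_offDiag_sgn_mul_sgn (a : ι → ι → ℝ) :
    ∑ g : ι → Bool, (∑ p ∈ Finset.univ.offDiag, a p.1 p.2 * sgn (g p.1) * sgn (g p.2)) ^ 2 =
      2 ^ Fintype.card ι * ∑ p ∈ Finset.univ.offDiag, a p.1 p.2 * (a p.1 p.2 + a p.2 p.1) := by
  set D := (Finset.univ : Finset ι).offDiag
  have hpair (p q : ι × ι) (hp : p ∈ D) (hq : q ∈ D) :
      ∑ g : ι → Bool, sgn (g p.1) * sgn (g p.2) * (sgn (g q.1) * sgn (g q.2)) =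
        if q = p ∨ q = p.swap then 2 ^ Fintype.card ι else 0 :=
    sum_sgn_mul_sgn_mul_sgn_mul_sgn (Finset.mem_offDiag.1 hp).2.2 (Finset.mem_offDiag.1 hq).2.2
  calc ∑ g : ι → Bool, (∑ p ∈ D, a p.1 p.2 * sgn (g p.1) * sgn (g p.2)) ^ 2
      = ∑ p ∈ D, ∑ q ∈ D, a p.1 p.2 * a q.1 q.2 *
          ∑ g : ι → Bool, sgn (g p.1) * sgn (g p.2) * (sgn (g q.1) * sgn (g q.2)) := by
        simp_rw [sq, Finset.sum_mul_sum, Finset.mul_sum]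
        rw [Finset.sum_comm]
        refine Finset.sum_congr rfl fun p _ => ?_
        rw [Finset.sum_comm]
        refine Finset.sum_congr rfl fun q _ => Finset.sum_congr rfl fun g _ => ?_
        ring
    _ = ∑ p ∈ D, a p.1 p.2 * 2 ^ Fintype.card ι *
          ∑ q ∈ D, if q = p ∨ q = p.swap then a q.1 q.2 else 0 := by
        refine Finset.sum_congr rfl fun p hp => ?_
        rw [Finset.mul_sum]
        refine Finset.sum_congr rfl fun q hq => ?_
        rw [hpair p q hp hq]
        split_ifs <;> ring
    _ = 2 ^ Fintype.card ι * ∑ p ∈ D, a p.1 p.2 * (a p.1 p.2 + a p.2 p.1) := by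
        rw [Finset.mul_sum]
        refine Finset.sum_congr rfl fun p hp => ?_
        rw [sum_offDiag_ite_pair_eq (fun q => a q.1 q.2) hp, Prod.fst_swap, Prod.snd_swap]
        ring

theorem sum_sum_mul_sgn_mul_sgn_eq_sum_diag_add_sum_offDiag (a : ι → ι → ℝ) (g : ι → Bool) :
    ∑ i, ∑ k, a i k * sgn (g i) * sgn (g k) =
      ∑ i, a i i + ∑ p ∈ Finset.univ.offDiag, a p.1 p.2 * sgn (g p.1) * sgn (g p.2) := by
  rw [← Finset.sum_product' Finset.univ Finset.univ (fun i k => a i k * sgn (g i) * sgn (g k)),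
    ← Finset.diag_union_offDiag, Finset.sum_union (Finset.disjoint_diag_offDiag _),
    Finset.sum_diag]
  simp only [mul_assoc, sgn_mul_self, mul_one]

theorem sum_sq_sum_sum_mul_sgn_mul_sgn (a : ι → ι → ℝ) :
    ∑ g : ι → Bool, (∑ i, ∑ k, a i k * sgn (g i) * sgn (g k)) ^ 2 =
      2 ^ Fintype.card ι * ((∑ i, a i i) ^ 2 +
        ∑ p ∈ Finset.univ.offDiag, a p.1 p.2 * (a p.1 p.2 + a p.2 p.1)) := by
  set Q : (ι → Bool) → ℝ := fun g =>
    ∑ p ∈ Finset.univ.offDiag, a p.1 p.2 * sgn (g p.1) * sgn (g p.2)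
  have hsq (g : ι → Bool) : (∑ i, ∑ k, a i k * sgn (g i) * sgn (g k)) ^ 2 =
      (∑ i, a i i) ^ 2 + 2 * (∑ i, a i i) * Q g + Q g ^ 2 := by
    rw [sum_sum_mul_sgn_mul_sgn_eq_sum_diag_add_sum_offDiag]; ring
  simp only [hsq, Finset.sum_add_distrib, ← Finset.mul_sum, Q, sum_sum_offDiag_sgn_mul_sgn,
    sum_sq_sum_offDiag_sgn_mul_sgn, Finset.sum_const, Finset.card_univ, Fintype.card_fun,
    Fintype.card_bool, nsmul_eq_mul]
  push_cast
  ring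

end Rademacher

theorem sum_sum_mul_ite_mul_sum_mul_ite {ι : Type*} [Fintype ι] {m : ℕ} (f : ι → ℕ)
    (hf : ∀ i, f i < m) (u v : ι → ℝ) :
    ∑ j : Fin m, (∑ i, u i * if f i = j.1 then 1 else 0) * (∑ i, v i * if f i = j.1 then 1 else 0) =
      ∑ i, ∑ k, u i * v k * if f i = f k then 1 else 0 := by
  have hbucket (i k : ι) :
      ∑ j : Fin m, (if f i = j.1 then (1 : ℝ) else 0) * (if f k = j.1 then 1 else 0) =
        if f i = f k then 1 else 0 := by
    have hj (j : Fin m) : f i = j.1 ↔ j = ⟨f i, hf i⟩ := by rw [Fin.ext_iff, eq_comm]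
    simp only [hj, ite_mul, one_mul, zero_mul, Finset.sum_ite_eq', Finset.mem_univ, if_true,
      @eq_comm _ (f k)]
  simp_rw [Finset.sum_mul_sum]
  rw [Finset.sum_comm]
  refine Finset.sum_congr rfl fun i _ => ?_
  rw [Finset.sum_comm]
  refine Finset.sum_congr rfl fun k _ => ?_
  rw [← hbucket, Finset.mul_sum]
  refine Finset.sum_congr rfl fun j _ => ?_
  ring

theorem card_mul_sum_ite_apply_eq_comp_apply {α β : Type*} [Fintype α] [DecidableEq α]
    [Fintype β] [DecidableEq β] (f : α → α) {b b' : β} (hb : b' ≠ b) :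
    (Fintype.card α : ℝ) * ∑ h : β → α, (if h b = f (h b') then 1 else 0) =
      Fintype.card (β → α) := by
  rw [Fintype.card_congr (Equiv.funSplitAt b α), Fintype.card_prod,
    ← Equiv.sum_comp (Equiv.funSplitAt b α).symm, Fintype.sum_prod_type, Finset.sum_comm]
  simp [Equiv.funSplitAt_symm_apply, hb]

theorem Fin.val_add_mod_eq_iff {m : ℕ} [NeZero m] (u w : Fin m) (a a' : ℕ) :
    (u.val + a) % m = (w.val + a') % m ↔ u = w + Fin.ofNat m a' - Fin.ofNat m a := by
  rw [eq_sub_iff_add_eq, Fin.ext_iff, Fin.val_add, Fin.val_add, Fin.val_ofNat, Fin.val_ofNat,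
    Nat.add_mod_mod, Nat.add_mod_mod]

section Robe

variable {n m Z : ℕ} (hdvd : Z ∣ n)

def block (i : Fin n) : Fin (n / Z) := ⟨i.1 / Z, blockLt hdvd i⟩

def collision (h : Fin (n / Z) → Fin m) (i k : Fin n) : ℝ :=
  if idx n m Z hdvd h i = idx n m Z hdvd h k then 1 else 0

theorem est_eq_sum_sum (hm : 0 < m) (x y : Fin n → ℝ)
    (ω : (Fin (n / Z) → Fin m) × (Fin n → Bool)) :
    est n m Z hdvd x y ω =
      ∑ i : Fin n, ∑ k : Fin n, x i * y k * sgn (ω.2 i) * sgn (ω.2 k) *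
        (if idx n m Z hdvd ω.1 i = idx n m Z hdvd ω.1 k then 1 else 0) := by
  rw [est, sum_sum_mul_ite_mul_sum_mul_ite (idx n m Z hdvd ω.1) fun i => Nat.mod_lt _ hm]
  refine Finset.sum_congr rfl fun i _ => Finset.sum_congr rfl fun k _ => ?_
  ring

theorem idx_eq_idx_iff_of_div_eq (hZ : 0 < Z) (hZm : Z ≤ m) (h : Fin (n / Z) → Fin m)
    {i k : Fin n} (hb : i.1 / Z = k.1 / Z) :
    idx n m Z hdvd h i = idx n m Z hdvd h k ↔ i = k := by
  refine ⟨fun he => ?_, fun he => he ▸ rfl⟩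
  have hblock : block hdvd i = block hdvd k := Fin.ext hb
  have hoffset : i.1 % Z = k.1 % Z := by
    have hlt (j : Fin n) : j.1 % Z < m := (Nat.mod_lt _ hZ).trans_le hZm
    change ((h (block hdvd i)).val + i.1 % Z) % m = ((h (block hdvd k)).val + k.1 % Z) % m at he
    rw [hblock] at he
    have hmod := Nat.ModEq.add_left_cancel' _ he
    rwa [Nat.ModEq, Nat.mod_eq_of_lt (hlt i), Nat.mod_eq_of_lt (hlt k)] at hmod
  rw [Fin.ext_iff, ← Nat.div_add_mod i.1 Z, ← Nat.div_add_mod k.1 Z, hb, hoffset]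

theorem sum_collision (hm : 0 < m) (hZ : 0 < Z) (hZm : Z ≤ m) {i k : Fin n} (hik : i ≠ k) :
    ∑ h : Fin (n / Z) → Fin m, collision hdvd h i k =
      if i.1 / Z ≠ k.1 / Z then (Fintype.card (Fin (n / Z) → Fin m) : ℝ) / m else 0 := by
  by_cases hb : i.1 / Z = k.1 / Z
  · simp [collision, idx_eq_idx_iff_of_div_eq hdvd hZ hZm _ hb, hik, hb]
  have := NeZero.of_pos hm
  have hblock : block hdvd k ≠ block hdvd i := fun h => hb (congrArg Fin.val h).symm
  set shift : Fin m → Fin m := fun v => v + Fin.ofNat m (k.1 % Z) - Fin.ofNat m (i.1 % Z)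
  have hcollision (h : Fin (n / Z) → Fin m) : collision hdvd h i k =
      if h (block hdvd i) = shift (h (block hdvd k)) then 1 else 0 :=
    if_congr (Fin.val_add_mod_eq_iff _ _ _ _) rfl rfl
  rw [if_pos hb, eq_div_iff (Nat.cast_ne_zero.2 hm.ne'), mul_comm, Finset.sum_congr rfl
    fun h _ => hcollision h]
  simpa using card_mul_sum_ite_apply_eq_comp_apply shift hblock

theorem sum_est_sq_mk (hm : 0 < m) (x y : Fin n → ℝ) (h : Fin (n / Z) → Fin m) :
    ∑ g : Fin n → Bool, est n m Z hdvd x y (h, g) ^ 2 =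
      2 ^ n * ((∑ i, x i * y i) ^ 2 + ∑ p ∈ Finset.univ.offDiag, collision hdvd h p.1 p.2 *
        (x p.1 ^ 2 * y p.2 ^ 2 + x p.1 * y p.1 * x p.2 * y p.2)) := by
  have hest (g : Fin n → Bool) : est n m Z hdvd x y (h, g) =
      ∑ i, ∑ k, x i * y k * collision hdvd h i k * sgn (g i) * sgn (g k) := by
    rw [est_eq_sum_sum hdvd hm]
    refine Finset.sum_congr rfl fun i _ => Finset.sum_congr rfl fun k _ => ?_
    rw [collision]; ring
  have hsymm (i k : Fin n) : collision hdvd h k i = collision hdvd h i k := by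
    simp only [collision, eq_comm]
  have hself (i : Fin n) : collision hdvd h i i = 1 := if_pos rfl
  simp only [hest, sum_sq_sum_sum_mul_sgn_mul_sgn, Fintype.card_fin, hself, mul_one, hsymm]
  congr 2
  refine Finset.sum_congr rfl fun p _ => ?_
  rw [collision]
  split_ifs <;> ring

theorem sum_est_sq (hm : 0 < m) (hZ : 0 < Z) (hZm : Z ≤ m) (x y : Fin n → ℝ) :
    ∑ ω : (Fin (n / Z) → Fin m) × (Fin n → Bool), est n m Z hdvd x y ω ^ 2 =
      Fintype.card ((Fin (n / Z) → Fin m) × (Fin n → Bool)) *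
        ((∑ i, x i * y i) ^ 2 + 1 / (m : ℝ) *
          ((∑ i : Fin n, ∑ j : Fin n, if i.1 / Z ≠ j.1 / Z then x i ^ 2 * y j ^ 2 else 0) +
           (∑ i : Fin n, ∑ j : Fin n,
              if i.1 / Z ≠ j.1 / Z then x i * y i * x j * y j else 0))) := by
  set F : Fin n → Fin n → ℝ := fun i j => x i ^ 2 * y j ^ 2 + x i * y i * x j * y j
  have hcross : ∑ p ∈ Finset.univ.offDiag, ∑ h : Fin (n / Z) → Fin m,
      collision hdvd h p.1 p.2 * F p.1 p.2 =
        Fintype.card (Fin (n / Z) → Fin m) / m *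
          ∑ i, ∑ j, if i.1 / Z ≠ j.1 / Z then F i j else 0 := by
    rw [← sum_offDiag_ite_eq_sum_sum _ (fun i h => h rfl), Finset.mul_sum]
    refine Finset.sum_congr rfl fun p hp => ?_
    rw [← Finset.sum_mul, sum_collision hdvd hm hZ hZm (Finset.mem_offDiag.1 hp).2.2]
    split_ifs <;> ring
  rw [Fintype.sum_prod_type]
  simp only [sum_est_sq_mk hdvd hm]
  rw [← Finset.mul_sum, Finset.sum_add_distrib, Finset.sum_const, Finset.sum_comm, hcross]
  have hsigns : Fintype.card (Fin n → Bool) = 2 ^ n := by simp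
  simp only [F, ite_add_zero, Finset.sum_add_distrib, Fintype.card_prod, hsigns, Finset.card_univ,
    nsmul_eq_mul]
  push_cast
  ring

end Robe

theorem robe_pairwise_expansion_and_second_moment_general (n m Z : ℕ)
    (hZ : 0 < Z)
    (hdvd : Z ∣ n) (hZm : Z ≤ m) (x y : Fin n → ℝ) :
    (∀ ω : (Fin (n / Z) → Fin m) × (Fin n → Bool),
      est n m Z hdvd x y ω =
        ∑ i : Fin n, ∑ i' : Fin n,
          x i * y i' * sgn (ω.2 i) * sgn (ω.2 i') *
            (if idx n m Z hdvd ω.1 i = idx n m Z hdvd ω.1 i' then 1 else 0)) ∧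
    expec n m Z (fun ω => (est n m Z hdvd x y ω) ^ 2) =
      (∑ i : Fin n, x i * y i) ^ 2 +
        (1 / (m : ℝ)) *
          ((∑ i : Fin n, ∑ j : Fin n,
              if i.1 / Z ≠ j.1 / Z then x i ^ 2 * y j ^ 2 else 0) +
           (∑ i : Fin n, ∑ j : Fin n,
              if i.1 / Z ≠ j.1 / Z then x i * y i * x j * y j else 0)) := by
  have hm : 0 < m := hZ.trans_le hZm
  have : NeZero m := NeZero.of_pos hm
  refine ⟨est_eq_sum_sum hdvd hm x y, ?_⟩
  rw [expec, sum_est_sq hdvd hm hZ hZm, mul_div_cancel_left₀]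
  exact Nat.cast_ne_zero.2 Fintype.card_ne_zero

/-- The estimator admits the pairwise expansion
`Ŝ(x,y) = Σ_i Σ_{i'} x_i y_{i'} g(i) g(i') 𝟙[idx(i) = idx(i')]`, and its second
moment equals
`E[Ŝ²] = ⟨x,y⟩² + (1/m)·(Σ_{Z_id(i)≠Z_id(j)} x_i² y_j² + Σ_{Z_id(i)≠Z_id(j)} x_i y_i x_j y_j)`. -/
theorem robe_pairwise_expansion_and_second_moment (n m Z : ℕ)
    (hn : 0 < n) (hm : 0 < m) (hZ : 0 < Z)
    (hdvd : Z ∣ n) (hZm : Z ≤ m) (hmn : m ≤ n) (x y : Fin n → ℝ) :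
    (∀ ω : (Fin (n / Z) → Fin m) × (Fin n → Bool),
      est n m Z hdvd x y ω =
        ∑ i : Fin n, ∑ i' : Fin n,
          x i * y i' * sgn (ω.2 i) * sgn (ω.2 i') *
            (if idx n m Z hdvd ω.1 i = idx n m Z hdvd ω.1 i' then 1 else 0)) ∧
    expec n m Z (fun ω => (est n m Z hdvd x y ω) ^ 2) =
      (∑ i : Fin n, x i * y i) ^ 2 +
        (1 / (m : ℝ)) *
          ((∑ i : Fin n, ∑ j : Fin n,
              if i.1 / Z ≠ j.1 / Z then x i ^ 2 * y j ^ 2 else 0) +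
           (∑ i : Fin n, ∑ j : Fin n,
              if i.1 / Z ≠ j.1 / Z then x i * y i * x j * y j else 0)) :=
  robe_pairwise_expansion_and_second_moment_general n m Z hZ hdvd hZm x y
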